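/- arXiv:2005.08743 — 3 statements merged into one kernel-verified Lean document; each statement's English description precedes it below -/
import Mathlib

section
/- Let φ_t be the flow of u with Jacobian determinant Φ_t, let γ_t(x̂) = ∫_0^t Φ_s^{-1}(φ_s(x̂)) ds, and for boundary data I_0, I_1 define Ĩ(x̂,t) = (γ_t(x̂)/γ_1(x̂))·[I_1(φ_1(x̂)) − I_0(x̂)] + I_0(x̂) and I(x,t) = Ĩ(φ_t^{-1}(x), t). Then I satisfies the inhomogeneous transport equation ∂_t I + u·∇I = λ_{φ_t^{-1}(x)} Φ_t^{-1}(x), where λ_{x̂} = [I_1(φ_1(x̂)) − I_0(x̂)]/γ_1(x̂), together with I(·,0) = I_0 and I(φ_1(x̂),1) = I_1(φ_1(x̂)). -/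
/-!
Along a characteristic `s ↦ (φ_s x̂, s)` the function `I` equals `Ĩ(x̂, s)`, which is affine in
`γ_s(x̂)`; by the fundamental theorem of calculus its derivative is `λ_x̂ Φ_s⁻¹(φ_s x̂)`, and the
chain rule identifies that derivative with `∂_t I + u·∇I`. The chain rule needs `I` to be jointly
differentiable, which comes down to the parametric primitive `(x̂, t) ↦ γ_t(x̂)`: the substitution
`s = tτ` turns it into `t ∫_0^1 Φ_{tτ}⁻¹(φ_{tτ} x̂) dτ`, an integral over a fixed interval of a
`C¹` integrand (`Φ⁻¹` is a determinant of a derivative of the `C²` map `ψ`), which can be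
differentiated under the integral sign.
-/

noncomputable def jacDet {d : ℕ} (f : ((Fin d) → ℝ) → ((Fin d) → ℝ)) (x : (Fin d) → ℝ) : ℝ :=
  LinearMap.det
    ((fderiv ℝ f x : ((Fin d) → ℝ) →L[ℝ] ((Fin d) → ℝ)) :
      ((Fin d) → ℝ) →ₗ[ℝ] ((Fin d) → ℝ))

theorem contDiff_det_toLinearMap {𝕜 ι : Type*} [NontriviallyNormedField 𝕜] [Fintype ι]
    {n : WithTop ℕ∞} :
    ContDiff 𝕜 n fun A : (ι → 𝕜) →L[𝕜] (ι → 𝕜) => LinearMap.det (A : (ι → 𝕜) →ₗ[𝕜] (ι → 𝕜)) := by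
  classical
  simp_rw [← LinearMap.det_toMatrix', Matrix.det_apply, LinearMap.toMatrix'_apply,
    ContinuousLinearMap.coe_coe]
  fun_prop

theorem ContDiff.jacDet {d : ℕ} {P : Type*} [NormedAddCommGroup P] [NormedSpace ℝ P]
    {m n : WithTop ℕ∞} {ψ : P → (Fin d → ℝ) → (Fin d → ℝ)} {g : P → Fin d → ℝ}
    (hψ : ContDiff ℝ m (Function.uncurry ψ)) (hg : ContDiff ℝ n g) (hnm : n + 1 ≤ m) :
    ContDiff ℝ n fun p => jacDet (ψ p) (g p) :=
  contDiff_det_toLinearMap.comp (hψ.fderiv hg hnm)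

section ParametricIntegral

variable {H E : Type*} [NormedAddCommGroup H] [NormedSpace ℝ H] [ProperSpace H]
  [NormedAddCommGroup E] [NormedSpace ℝ E]

theorem differentiable_intervalIntegral_of_contDiff {G : H × ℝ → E} (hG : ContDiff ℝ 1 G)
    (a b : ℝ) : Differentiable ℝ fun p => ∫ s in a..b, G (p, s) := by
  intro p₀
  set DG : H × ℝ → H →L[ℝ] E := fun q => fderiv ℝ G q ∘L ContinuousLinearMap.inl ℝ H ℝ
  have hDG : Continuous DG := (hG.continuous_fderiv one_ne_zero).clm_comp continuous_const
  have hpartial : ∀ p s, HasFDerivAt (fun p => G (p, s)) (DG (p, s)) p := fun p s =>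
    ((hG.differentiable one_ne_zero) (p, s)).hasFDerivAt.comp p (hasFDerivAt_prodMk_left p s)
  have hGs : ∀ p, Continuous fun s => G (p, s) := fun p => by fun_prop
  obtain ⟨C, hC⟩ := ((isCompact_closedBall p₀ 1).prod isCompact_uIcc).exists_bound_of_continuousOn
    hDG.continuousOn (f := DG) (s := Metric.closedBall p₀ 1 ×ˢ Set.uIcc a b)
  refine (intervalIntegral.hasFDerivAt_integral_of_dominated_of_fderiv_le
    (F' := fun p s => DG (p, s)) (bound := fun _ => C) (Metric.closedBall_mem_nhds p₀ one_pos)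
    (.of_forall fun p => (hGs p).aestronglyMeasurable) ((hGs p₀).intervalIntegrable a b)
    (by fun_prop : Continuous fun s => DG (p₀, s)).aestronglyMeasurable ?_
    intervalIntegrable_const ?_).differentiableAt
  · exact .of_forall fun s hs p hp => hC (p, s) ⟨hp, Set.uIoc_subset_uIcc hs⟩
  · exact .of_forall fun s _ p _ => hpartial p s

theorem differentiable_primitive_of_contDiff {F : H × ℝ → E} (hF : ContDiff ℝ 1 F) :
    Differentiable ℝ fun q : H × ℝ => ∫ s in (0 : ℝ)..q.2, F (q.1, s) := by
  have hsubst : (fun q : H × ℝ => ∫ s in (0 : ℝ)..q.2, F (q.1, s)) =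
      fun q => q.2 • ∫ τ in (0 : ℝ)..1, F (q.1, q.2 * τ) := by
    funext q
    rw [intervalIntegral.smul_integral_comp_mul_left (fun s => F (q.1, s)), mul_zero, mul_one]
  rw [hsubst]
  exact differentiable_snd.smul (differentiable_intervalIntegral_of_contDiff
    (G := fun r : (H × ℝ) × ℝ => F (r.1.1, r.1.2 * r.2)) (hF.comp (by fun_prop)) 0 1)

end ParametricIntegral

section

variable {E F : Type*} [NormedAddCommGroup E] [NormedSpace ℝ E]
  [NormedAddCommGroup F] [NormedSpace ℝ F]

theorem deriv_add_fderiv_eq_of_hasDerivAt_along {I : E → ℝ → F} {x : E} {t : ℝ}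
    (hI : DifferentiableAt ℝ (fun q : E × ℝ => I q.1 q.2) (x, t)) {c : ℝ → E} {v : E}
    (hc : HasDerivAt c v t) (hct : c t = x) {a : F} (ha : HasDerivAt (fun s => I (c s) s) a t) :
    deriv (fun s => I x s) t + fderiv ℝ (fun y => I y t) x v = a := by
  set L := fderiv ℝ (fun q : E × ℝ => I q.1 q.2) (x, t)
  have hL : HasFDerivAt (fun q : E × ℝ => I q.1 q.2) L (x, t) := hI.hasFDerivAt
  have htime : deriv (fun s => I x s) t = L (0, 1) :=
    (hL.comp_hasDerivAt t ((hasDerivAt_const t x).prodMk (hasDerivAt_id t))).deriv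
  have hspace : fderiv ℝ (fun y => I y t) x = L ∘L ContinuousLinearMap.inl ℝ E ℝ :=
    (hL.comp (f := fun y => (y, t)) x (hasFDerivAt_prodMk_left x t)).fderiv
  have hchar : HasDerivAt (fun s => I (c s) s) (L (v, 1)) t :=
    hL.comp_hasDerivAt_of_eq t (hc.prodMk (hasDerivAt_id t)) (by rw [hct]; rfl)
  rw [htime, hspace, ← hchar.unique ha, ContinuousLinearMap.comp_apply,
    ContinuousLinearMap.inl_apply, ← map_add, Prod.mk_add_mk, zero_add, add_zero]

theorem differentiable_interpolant {γ : E → ℝ → ℝ}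
    (hγ : Differentiable ℝ fun q : E × ℝ => γ q.1 q.2) (hγ1 : ∀ x, γ x 1 ≠ 0) {f g : E → ℝ}
    (hf : Differentiable ℝ f) (hg : Differentiable ℝ g) :
    Differentiable ℝ fun q : E × ℝ => γ q.1 q.2 / γ q.1 1 * (f q.1 - g q.1) + g q.1 := by
  have hγ1_diff : Differentiable ℝ fun q : E × ℝ => γ q.1 1 :=
    hγ.comp (differentiable_fst.prodMk (differentiable_const 1))
  simp only [div_eq_mul_inv]
  exact ((hγ.mul (hγ1_diff.inv fun q => hγ1 _)).mul
    ((hf.comp differentiable_fst).sub (hg.comp differentiable_fst))).add (hg.comp differentiable_fst)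

end

theorem ContinuousLinearMap.sum_apply_mul_apply_single {R ι : Type*} [Semiring R]
    [TopologicalSpace R] [Fintype ι] [DecidableEq ι] (L : (ι → R) →L[R] R) (v : ι → R) :
    ∑ i, v i * L (Pi.single i 1) = L v := by
  conv_rhs => rw [pi_eq_sum_univ' v]
  simp [map_sum]

theorem metamorphosis_analytic_solution_general
    {d : ℕ}
    (u : ((Fin d) → ℝ) → ℝ → ((Fin d) → ℝ))
    (φ ψ : ℝ → ((Fin d) → ℝ) → ((Fin d) → ℝ))
    (hφ : ContDiff ℝ 2 (fun p : ((Fin d) → ℝ) × ℝ => φ p.2 p.1))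
    (hψ : ContDiff ℝ 2 (fun p : ((Fin d) → ℝ) × ℝ => ψ p.2 p.1))
    (hφ0 : ∀ xh, φ 0 xh = xh)
    (hflow : ∀ xh t, HasDerivAt (fun s => φ s xh) (u (φ t xh) t) t)
    (hinv : ∀ t, Function.LeftInverse (ψ t) (φ t) ∧ Function.RightInverse (ψ t) (φ t))
    (I0 I1 : ((Fin d) → ℝ) → ℝ)
    (hI0 : Differentiable ℝ I0) (hI1 : Differentiable ℝ I1)
    (Φinv : ((Fin d) → ℝ) → ℝ → ℝ)
    (hΦinv : ∀ x t, Φinv x t = jacDet (ψ t) x)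
    (γ : ((Fin d) → ℝ) → ℝ → ℝ)
    (hγ : ∀ xh t, γ xh t = ∫ s in (0:ℝ)..t, Φinv (φ s xh) s)
    (hγ1 : ∀ xh, γ xh 1 ≠ 0)
    (lam : ((Fin d) → ℝ) → ℝ)
    (hlam : ∀ xh, lam xh = (I1 (φ 1 xh) - I0 xh) / γ xh 1)
    (Itil : ((Fin d) → ℝ) → ℝ → ℝ)
    (hItil : ∀ xh t, Itil xh t = (γ xh t / γ xh 1) * (I1 (φ 1 xh) - I0 xh) + I0 xh)
    (I : ((Fin d) → ℝ) → ℝ → ℝ)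
    (hI : ∀ x t, I x t = Itil (ψ t x) t) :
    (∀ x t,
        deriv (fun s => I x s) t
          + ∑ i, u x t i * fderiv ℝ (fun y => I y t) x (Pi.single i 1)
        = lam (ψ t x) * Φinv x t) ∧
    (∀ x, I x 0 = I0 x) ∧
    (∀ xh, I (φ 1 xh) 1 = I1 (φ 1 xh)) := by
  have hΦinv_char : ContDiff ℝ 1 fun q : (Fin d → ℝ) × ℝ => Φinv (φ q.2 q.1) q.2 := by
    simp only [hΦinv]
    exact ContDiff.jacDet (ψ := fun q : (Fin d → ℝ) × ℝ => ψ q.2)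
      (hψ.comp (contDiff_snd.prodMk (contDiff_snd.comp contDiff_fst))) (hφ.of_le one_le_two)
      (by norm_num)
  have hγ_diff : Differentiable ℝ fun q : (Fin d → ℝ) × ℝ => γ q.1 q.2 := by
    simpa only [hγ] using differentiable_primitive_of_contDiff hΦinv_char
  have hφ1 : Differentiable ℝ (φ 1) :=
    (hφ.differentiable two_ne_zero).comp (differentiable_id.prodMk (differentiable_const 1))
  have hItil_diff : Differentiable ℝ fun q : (Fin d → ℝ) × ℝ => Itil q.1 q.2 := by
    simp only [hItil]
    exact differentiable_interpolant hγ_diff hγ1 (hI1.comp hφ1) hI0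
  have hI_diff : Differentiable ℝ fun q : (Fin d → ℝ) × ℝ => I q.1 q.2 := by
    simp only [hI]
    exact hItil_diff.comp ((hψ.differentiable two_ne_zero).prodMk differentiable_snd)
  refine ⟨fun x t => ?_, fun x => ?_, fun xh => ?_⟩
  · set xh := ψ t x
    have hx : φ t xh = x := (hinv t).2 x
    have hγ_deriv : HasDerivAt (fun s => γ xh s) (Φinv x t) t := by
      simp only [hγ, ← hx]
      exact (hΦinv_char.continuous.comp (continuous_const.prodMk continuous_id)
        |>.integral_hasStrictDerivAt 0 t).hasDerivAt
    have hchar : HasDerivAt (fun s => I (φ s xh) s) (lam xh * Φinv x t) t := by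
      have hval : lam xh * Φinv x t = Φinv x t / γ xh 1 * (I1 (φ 1 xh) - I0 xh) := by
        rw [hlam]
        ring
      simp only [hI, (hinv _).1 xh, hItil, hval]
      exact ((hγ_deriv.div_const _).mul_const _).add_const _
    rw [ContinuousLinearMap.sum_apply_mul_apply_single]
    exact deriv_add_fderiv_eq_of_hasDerivAt_along (hI_diff _) (hx ▸ hflow xh t) hx hchar
  · have hψ0 : ψ 0 x = x := by simpa only [hφ0] using (hinv 0).2 x
    simp [hI, hItil, hψ0, hγ]
  · rw [hI, hItil, (hinv 1).1 xh, div_self (hγ1 xh), one_mul, sub_add_cancel]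

/-- with `φ_t` the flow of `u`, `Φinv x t = det D(φ_t⁻¹)(x)`,
`γ_t(xh) = ∫_0^t Φinv(φ_s(xh), s) ds`, `lam xh = (I1(φ_1 xh) - I0 xh)/γ_1(xh)`,
`Ĩ(xh,t) = (γ_t(xh)/γ_1(xh))(I1(φ_1 xh) - I0 xh) + I0 xh` and `I(x,t) = Ĩ(φ_t⁻¹ x, t)`,
the function `I` satisfies the inhomogeneous transport equation
`∂_t I + u·∇I = lam(φ_t⁻¹ x) Φinv(x,t)` together with `I(·,0) = I0` and
`I(φ_1 xh, 1) = I1(φ_1 xh)`. -/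
theorem metamorphosis_analytic_solution
    {d : ℕ}
    (u : ((Fin d) → ℝ) → ℝ → ((Fin d) → ℝ))
    (hu : ContDiff ℝ 2 (fun p : ((Fin d) → ℝ) × ℝ => u p.1 p.2))
    (φ ψ : ℝ → ((Fin d) → ℝ) → ((Fin d) → ℝ))
    (hφ : ContDiff ℝ 2 (fun p : ((Fin d) → ℝ) × ℝ => φ p.2 p.1))
    (hψ : ContDiff ℝ 2 (fun p : ((Fin d) → ℝ) × ℝ => ψ p.2 p.1))
    (hφ0 : ∀ xh, φ 0 xh = xh)
    (hflow : ∀ xh t, HasDerivAt (fun s => φ s xh) (u (φ t xh) t) t)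
    (hinv : ∀ t, Function.LeftInverse (ψ t) (φ t) ∧ Function.RightInverse (ψ t) (φ t))
    (I0 I1 : ((Fin d) → ℝ) → ℝ)
    (hI0 : Differentiable ℝ I0) (hI1 : Differentiable ℝ I1)
    (Φinv : ((Fin d) → ℝ) → ℝ → ℝ)
    (hΦinv : ∀ x t, Φinv x t = jacDet (ψ t) x)
    (γ : ((Fin d) → ℝ) → ℝ → ℝ)
    (hγ : ∀ xh t, γ xh t = ∫ s in (0:ℝ)..t, Φinv (φ s xh) s)
    (hγ1 : ∀ xh, γ xh 1 ≠ 0)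
    (lam : ((Fin d) → ℝ) → ℝ)
    (hlam : ∀ xh, lam xh = (I1 (φ 1 xh) - I0 xh) / γ xh 1)
    (Itil : ((Fin d) → ℝ) → ℝ → ℝ)
    (hItil : ∀ xh t, Itil xh t = (γ xh t / γ xh 1) * (I1 (φ 1 xh) - I0 xh) + I0 xh)
    (I : ((Fin d) → ℝ) → ℝ → ℝ)
    (hI : ∀ x t, I x t = Itil (ψ t x) t) :
    (∀ x t,
        deriv (fun s => I x s) t
          + ∑ i, u x t i * fderiv ℝ (fun y => I y t) x (Pi.single i 1)
        = lam (ψ t x) * Φinv x t) ∧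
    (∀ x, I x 0 = I0 x) ∧
    (∀ xh, I (φ 1 xh) 1 = I1 (φ 1 xh)) :=
  metamorphosis_analytic_solution_general u φ ψ hφ hψ hφ0 hflow hinv I0 I1 hI0 hI1 Φinv hΦinv γ hγ
    hγ1 lam hlam Itil hItil I hI
end

section
/- Trace inequality for the graph space: under Assumption 1 there exists a constant C > 0 depending only on Ω and u such that for every I ∈ G(b;Ω) and i = 0,1, ‖I‖²_{L²(Γ_i)} ≤ C ( ‖I‖²_{L²(Ω)} + ‖b·∇_t I‖²_{L²(Ω)} ). -/
/-!
Along a trajectory `t ↦ (t, φ t x)` of `b` the material derivative `b·∇_t I` is the ordinary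
derivative of `F t = I (t, φ t x)`, and a function on `[0, 1]` satisfies the one-dimensional
trace bound `F s ² ≤ 2 ∫₀¹ (F² + F'²)` (compare `F s ²` with `F t ²` at a point where `F t ²` is at
most its mean, and bound the difference by `∫ |2 F F'|`). Integrating over `x ∈ ω` bounds
`∫_ω I (s, φ s x)²` by the integral of `I² + (b·∇_t I)²` in Lagrangian coordinates; going back to
Eulerian coordinates, in each time slice and once more through `φ s`, costs two Jacobian factors.

The Jacobian factors are controlled through Lipschitz constants: by Grönwall's inequality the
flow maps are `e^K`-bi-Lipschitz on `[0, 1]`, and an `L`-Lipschitz map of `ℝ^d` enlarges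
`d`-dimensional Hausdorff measure, which is Lebesgue measure, by at most `L^d`.
-/

open MeasureTheory Set Real
open scoped ENNReal NNReal Interval

section Flow

variable {E : Type*} [NormedAddCommGroup E] [NormedSpace ℝ E] {v : ℝ → E → E} {K : ℝ≥0}
  {φ : ℝ → E → E}

theorem dist_flow_le_mul_exp (hv : ∀ t, LipschitzWith K (v t))
    (hφ : ∀ x t, HasDerivAt (φ · x) (v t (φ t x)) t) {s t : ℝ} (hst : s ≤ t) (x y : E) :
    dist (φ t x) (φ t y) ≤ dist (φ s x) (φ s y) * exp (K * (t - s)) := by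
  have hcont : ∀ z, ContinuousOn (φ · z) (Icc s t) := fun z =>
    HasDerivAt.continuousOn fun r _ => hφ z r
  exact dist_le_of_trajectories_ODE hv (hcont x) (fun r _ => (hφ x r).hasDerivWithinAt)
    (hcont y) (fun r _ => (hφ y r).hasDerivWithinAt) le_rfl t ⟨hst, le_rfl⟩

theorem dist_flow_le_mul_exp_rev (hv : ∀ t, LipschitzWith K (v t))
    (hφ : ∀ x t, HasDerivAt (φ · x) (v t (φ t x)) t) {s t : ℝ} (hst : s ≤ t) (x y : E) :
    dist (φ s x) (φ s y) ≤ dist (φ t x) (φ t y) * exp (K * (t - s)) := by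
  have hrev : ∀ z r, HasDerivAt (fun r => φ (t - r) z) (-v (t - r) (φ (t - r) z)) r :=
    fun z r => by
      simpa [Function.comp_def] using (hφ z (t - r)).scomp r ((hasDerivAt_id r).const_sub t)
  simpa using dist_flow_le_mul_exp (v := fun r => -v (t - r)) (fun r => (hv (t - r)).neg) hrev
    (sub_nonneg.2 hst) x y

theorem lipschitzWith_flow (hv : ∀ t, LipschitzWith K (v t))
    (hφ : ∀ x t, HasDerivAt (φ · x) (v t (φ t x)) t) (hφ0 : ∀ x, φ 0 x = x) {t T : ℝ}
    (ht : t ∈ Icc 0 T) : LipschitzWith (Real.toNNReal (exp (K * T))) (φ t) :=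
  LipschitzWith.of_dist_le_mul fun x y => by
    rw [Real.coe_toNNReal _ (exp_nonneg _), mul_comm]
    calc dist (φ t x) (φ t y) ≤ dist x y * exp (K * (t - 0)) := by
          simpa only [hφ0] using dist_flow_le_mul_exp hv hφ ht.1 x y
      _ ≤ dist x y * exp (K * T) := by gcongr; linarith [ht.2]

theorem antilipschitzWith_flow (hv : ∀ t, LipschitzWith K (v t))
    (hφ : ∀ x t, HasDerivAt (φ · x) (v t (φ t x)) t) (hφ0 : ∀ x, φ 0 x = x) {t T : ℝ}
    (ht : t ∈ Icc 0 T) : AntilipschitzWith (Real.toNNReal (exp (K * T))) (φ t) :=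
  AntilipschitzWith.of_le_mul_dist fun x y => by
    rw [Real.coe_toNNReal _ (exp_nonneg _), mul_comm]
    calc dist x y ≤ dist (φ t x) (φ t y) * exp (K * (t - 0)) := by
          simpa only [hφ0] using dist_flow_le_mul_exp_rev hv hφ ht.1 x y
      _ ≤ dist (φ t x) (φ t y) * exp (K * T) := by gcongr; linarith [ht.2]

theorem continuousOn_uncurry_flow (hv : ∀ t, LipschitzWith K (v t))
    (hφ : ∀ x t, HasDerivAt (φ · x) (v t (φ t x)) t) (hφ0 : ∀ x, φ 0 x = x) (T : ℝ) :
    ContinuousOn (Function.uncurry φ) (Icc 0 T ×ˢ univ) :=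
  continuousOn_prod_of_continuousOn_lipschitzOnWith' _ _
    (fun _ ht => (lipschitzWith_flow hv hφ hφ0 ht).lipschitzOnWith)
    (fun x _ => HasDerivAt.continuousOn fun t _ => hφ x t)

end Flow

section ChangeOfVariables

variable {ι : Type*} [Fintype ι] {L : ℝ≥0} {f : (ι → ℝ) → ι → ℝ}

theorem LipschitzWith.volume_image_le (hf : LipschitzWith L f) (s : Set (ι → ℝ)) :
    volume (f '' s) ≤ (L : ℝ≥0∞) ^ Fintype.card ι * volume s := by
  simpa [ENNReal.rpow_natCast] using
    hf.hausdorffMeasure_image_le (d := Fintype.card ι) (Nat.cast_nonneg _) s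

theorem AntilipschitzWith.volume_le_image (hf : AntilipschitzWith L f) (s : Set (ι → ℝ)) :
    volume s ≤ (L : ℝ≥0∞) ^ Fintype.card ι * volume (f '' s) := by
  simpa [ENNReal.rpow_natCast] using
    hf.le_hausdorffMeasure_image (d := Fintype.card ι) (Nat.cast_nonneg _) s

theorem AntilipschitzWith.setLIntegral_comp_le (hf : AntilipschitzWith L f) (hfm : Measurable f)
    {s : Set (ι → ℝ)} (hs : MapsTo f s s) {h : (ι → ℝ) → ℝ≥0∞} (hh : Measurable h) :
    ∫⁻ x in s, h (f x) ≤ (L : ℝ≥0∞) ^ Fintype.card ι * ∫⁻ y in s, h y := by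
  have hmap : (volume.restrict s).map f ≤ ((L : ℝ≥0∞) ^ Fintype.card ι) • volume.restrict s := by
    refine Measure.le_intro fun A hA _ => ?_
    rw [Measure.map_apply hfm hA, Measure.restrict_apply (hfm hA), Measure.smul_apply,
      Measure.restrict_apply hA, smul_eq_mul]
    refine (hf.volume_le_image _).trans (mul_le_mul_right (measure_mono ?_) _)
    rintro _ ⟨x, ⟨hxA, hxs⟩, rfl⟩
    exact ⟨hxA, hs hxs⟩
  calc ∫⁻ x in s, h (f x) = ∫⁻ y, h y ∂(volume.restrict s).map f := (lintegral_map hh hfm).symm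
    _ ≤ ∫⁻ y, h y ∂(((L : ℝ≥0∞) ^ Fintype.card ι) • volume.restrict s) :=
      lintegral_mono' hmap le_rfl
    _ = _ := lintegral_smul_measure _ _

theorem LipschitzWith.setLIntegral_le_comp (hf : LipschitzWith L f)
    {s : Set (ι → ℝ)} (hs : SurjOn f s s) {h : (ι → ℝ) → ℝ≥0∞} (hh : Measurable h) :
    ∫⁻ y in s, h y ≤ (L : ℝ≥0∞) ^ Fintype.card ι * ∫⁻ x in s, h (f x) := by
  have hfm : Measurable f := hf.continuous.measurable
  have hmap : volume.restrict s ≤ ((L : ℝ≥0∞) ^ Fintype.card ι) • (volume.restrict s).map f := by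
    refine Measure.le_intro fun A hA _ => ?_
    rw [Measure.smul_apply, Measure.map_apply hfm hA, Measure.restrict_apply (hfm hA),
      Measure.restrict_apply hA, smul_eq_mul]
    refine (measure_mono ?_).trans (hf.volume_image_le _)
    intro y ⟨hyA, hys⟩
    obtain ⟨x, hxs, rfl⟩ := hs hys
    exact ⟨x, ⟨hyA, hxs⟩, rfl⟩
  calc ∫⁻ y in s, h y
      ≤ ∫⁻ y, h y ∂(((L : ℝ≥0∞) ^ Fintype.card ι) • (volume.restrict s).map f) :=
        lintegral_mono' hmap le_rfl
    _ = _ := by rw [lintegral_smul_measure, lintegral_map hh hfm, smul_eq_mul]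

end ChangeOfVariables

section Interval

variable {F g : ℝ → ℝ}

theorem sq_le_sq_add_integral_of_hasDerivAt {a b : ℝ} (hF : ∀ t, HasDerivAt F (g t) t)
    (hF2 : IntegrableOn (fun t => F t ^ 2) (Icc a b))
    (hg2 : IntegrableOn (fun t => g t ^ 2) (Icc a b)) {s t : ℝ} (hs : s ∈ Icc a b)
    (ht : t ∈ Icc a b) :
    F s ^ 2 ≤ F t ^ 2 + ∫ r in Icc a b, (F r ^ 2 + g r ^ 2) := by
  obtain rfl : g = deriv F := funext fun t => (hF t).deriv.symm
  have hFc : Continuous F := continuous_iff_continuousAt.2 fun t => (hF t).continuousAt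
  have hbound : ∀ r, ‖2 * F r * deriv F r‖ ≤ F r ^ 2 + deriv F r ^ 2 := fun r => by
    rw [Real.norm_eq_abs, abs_le]
    constructor <;> nlinarith [sq_nonneg (F r + deriv F r), sq_nonneg (F r - deriv F r)]
  have hsum := hF2.add hg2
  have hint : IntegrableOn (fun r => 2 * F r * deriv F r) (Icc a b) :=
    hsum.mono' ((hFc.measurable.const_mul 2).mul (measurable_deriv F)).aestronglyMeasurable
      (ae_of_all _ hbound)
  have hsub : Ι t s ⊆ Icc a b := uIoc_subset_uIcc.trans (uIcc_subset_Icc ht hs)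
  have hftc : ∫ r in t..s, 2 * F r * deriv F r = F s ^ 2 - F t ^ 2 :=
    intervalIntegral.integral_eq_sub_of_hasDerivAt (fun r _ => by simpa using (hF r).pow 2)
      (hint.mono_set (uIcc_subset_Icc ht hs)).intervalIntegrable
  calc F s ^ 2 = F t ^ 2 + ∫ r in t..s, 2 * F r * deriv F r := by rw [hftc]; ring
    _ ≤ F t ^ 2 + ∫ r in Ι t s, ‖2 * F r * deriv F r‖ := by
      grw [← intervalIntegral.norm_integral_le_integral_norm_uIoc, ← Real.le_norm_self]
    _ ≤ F t ^ 2 + ∫ r in Ι t s, (F r ^ 2 + deriv F r ^ 2) :=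
      (add_le_add_iff_left _).2
        (setIntegral_mono (hint.mono_set hsub).norm (hsum.mono_set hsub) hbound)
    _ ≤ F t ^ 2 + ∫ r in Icc a b, (F r ^ 2 + deriv F r ^ 2) :=
      (add_le_add_iff_left _).2 (setIntegral_mono_set hsum
        (ae_of_all _ fun r => add_nonneg (sq_nonneg _) (sq_nonneg _)) hsub.eventuallyLE)

theorem sq_le_two_mul_integral_of_hasDerivAt (hF : ∀ t, HasDerivAt F (g t) t)
    (hF2 : IntegrableOn (fun t => F t ^ 2) (Icc 0 1))
    (hg2 : IntegrableOn (fun t => g t ^ 2) (Icc 0 1)) {s : ℝ} (hs : s ∈ Icc (0 : ℝ) 1) :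
    F s ^ 2 ≤ 2 * ∫ r in Icc (0 : ℝ) 1, (F r ^ 2 + g r ^ 2) := by
  have : IsProbabilityMeasure (volume.restrict (Icc (0 : ℝ) 1)) := ⟨by simp⟩
  have hnull : volume.restrict (Icc (0 : ℝ) 1) (Icc 0 1)ᶜ = 0 := by
    simp [Measure.restrict_apply' measurableSet_Icc]
  obtain ⟨t, ht, hFt⟩ := exists_notMem_null_le_integral hF2 hnull
  have hF2_le : ∫ r in Icc (0 : ℝ) 1, F r ^ 2 ≤ ∫ r in Icc (0 : ℝ) 1, (F r ^ 2 + g r ^ 2) :=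
    integral_mono hF2 (hF2.add hg2) fun r => le_add_of_nonneg_right (sq_nonneg _)
  linarith [sq_le_sq_add_integral_of_hasDerivAt hF hF2 hg2 hs (not_not.1 ht)]

theorem ofReal_sq_le_two_mul_lintegral_of_hasDerivAt (hF : ∀ t, HasDerivAt F (g t) t) {s : ℝ}
    (hs : s ∈ Icc (0 : ℝ) 1) :
    ENNReal.ofReal (F s ^ 2) ≤ 2 * ∫⁻ r in Icc (0 : ℝ) 1, ENNReal.ofReal (F r ^ 2 + g r ^ 2) := by
  obtain rfl : g = deriv F := funext fun t => (hF t).deriv.symm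
  have hFc : Continuous F := continuous_iff_continuousAt.2 fun t => (hF t).continuousAt
  by_cases htop : ∫⁻ r in Icc (0 : ℝ) 1, ENNReal.ofReal (F r ^ 2 + deriv F r ^ 2) = ∞
  · simp [htop]
  have hint : IntegrableOn (fun r => F r ^ 2 + deriv F r ^ 2) (Icc 0 1) :=
    (lintegral_ofReal_ne_top_iff_integrable
      ((hFc.measurable.pow_const 2).add ((measurable_deriv F).pow_const 2)).aestronglyMeasurable
      (ae_of_all _ fun r => add_nonneg (sq_nonneg _) (sq_nonneg _))).1 htop
  have hF2 : IntegrableOn (fun r => F r ^ 2) (Icc 0 1) :=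
    hint.mono' (hFc.measurable.pow_const 2).aestronglyMeasurable (ae_of_all _ fun r => by
      rw [Real.norm_of_nonneg (sq_nonneg _)]; exact le_add_of_nonneg_right (sq_nonneg _))
  have hg2 : IntegrableOn (fun r => deriv F r ^ 2) (Icc 0 1) :=
    hint.mono' ((measurable_deriv F).pow_const 2).aestronglyMeasurable (ae_of_all _ fun r => by
      rw [Real.norm_of_nonneg (sq_nonneg _)]; exact le_add_of_nonneg_left (sq_nonneg _))
  rw [← ofReal_integral_eq_lintegral_ofReal hint
      (ae_of_all _ fun r => add_nonneg (sq_nonneg _) (sq_nonneg _)),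
    ← ENNReal.ofReal_ofNat 2, ← ENNReal.ofReal_mul zero_le_two]
  exact ENNReal.ofReal_le_ofReal (sq_le_two_mul_integral_of_hasDerivAt hF hF2 hg2 hs)

end Interval

theorem integral_le_of_lintegral_ofReal_le {α : Type*} [MeasurableSpace α] {μ : Measure α}
    {f : α → ℝ} (hf : 0 ≤ᵐ[μ] f) (hfm : AEStronglyMeasurable f μ) {c : ℝ} (hc : 0 ≤ c)
    (h : ∫⁻ x, ENNReal.ofReal (f x) ∂μ ≤ ENNReal.ofReal c) : ∫ x, f x ∂μ ≤ c := by
  rw [integral_eq_lintegral_of_nonneg_ae hf hfm]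
  exact ENNReal.toReal_le_of_le_ofReal hc h

section Lagrangian

variable {ι : Type*} [Fintype ι] {L : ℝ≥0} {ω : Set (ι → ℝ)} {T : Set ℝ}
  {φ : ℝ → (ι → ℝ) → ι → ℝ}

theorem setLIntegral_setLIntegral_comp_le (hT : MeasurableSet T) (hω : MeasurableSet ω)
    (hφ : ContinuousOn (Function.uncurry φ) (T ×ˢ univ))
    (hanti : ∀ t ∈ T, AntilipschitzWith L (φ t)) (hmaps : ∀ t ∈ T, MapsTo (φ t) ω ω)
    {R : ℝ × (ι → ℝ) → ℝ≥0∞} (hR : Measurable R) :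
    ∫⁻ x in ω, ∫⁻ t in T, R (t, φ t x) ≤
      (L : ℝ≥0∞) ^ Fintype.card ι * ∫⁻ p in T ×ˢ ω, R p := by
  have hRφ : AEMeasurable (fun p : ℝ × (ι → ℝ) => R (p.1, φ p.1 p.2))
      ((volume.restrict T).prod (volume.restrict ω)) := by
    rw [Measure.prod_restrict, ← Measure.volume_eq_prod]
    exact hR.comp_aemeasurable ((continuous_fst.continuousOn.prodMk
      (hφ.mono (prod_mono le_rfl (subset_univ ω)))).aemeasurable (hT.prod hω))
  have hslice : ∀ t ∈ T, Continuous (φ t) := fun t ht =>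
    hφ.comp_continuous (continuous_const.prodMk continuous_id) fun x => ⟨ht, mem_univ x⟩
  calc ∫⁻ x in ω, ∫⁻ t in T, R (t, φ t x)
      = ∫⁻ t in T, ∫⁻ x in ω, R (t, φ t x) := (lintegral_lintegral_swap hRφ).symm
    _ ≤ ∫⁻ t in T, (L : ℝ≥0∞) ^ Fintype.card ι * ∫⁻ x in ω, R (t, x) :=
      setLIntegral_mono' hT fun t ht => (hanti t ht).setLIntegral_comp_le
        (hslice t ht).measurable (hmaps t ht) (hR.comp measurable_prodMk_left)
    _ = (L : ℝ≥0∞) ^ Fintype.card ι * ∫⁻ p in T ×ˢ ω, R p := by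
      rw [lintegral_const_mul' _ _ (by simp), Measure.volume_eq_prod, ← Measure.prod_restrict,
        lintegral_prod _ hR.aemeasurable]

theorem setLIntegral_sq_comp_flow_le {I : ℝ × (ι → ℝ) → ℝ} (hI : Differentiable ℝ I)
    {u : ℝ × (ι → ℝ) → ι → ℝ} (hu : Continuous u)
    (hflow : ∀ x t, HasDerivAt (φ · x) (u (t, φ t x)) t) (hω : MeasurableSet ω)
    (hφ : ContinuousOn (Function.uncurry φ) (Icc 0 1 ×ˢ univ))
    (hanti : ∀ t ∈ Icc (0 : ℝ) 1, AntilipschitzWith L (φ t))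
    (hmaps : ∀ t ∈ Icc (0 : ℝ) 1, MapsTo (φ t) ω ω) {s : ℝ} (hs : s ∈ Icc (0 : ℝ) 1) :
    ∫⁻ x in ω, ENNReal.ofReal (I (s, φ s x) ^ 2) ≤
      2 * (L : ℝ≥0∞) ^ Fintype.card ι *
        ∫⁻ p in Icc (0 : ℝ) 1 ×ˢ ω, ENNReal.ofReal (I p ^ 2 + fderiv ℝ I p (1, u p) ^ 2) := by
  have hmaterial : ∀ x t, HasDerivAt (fun t => I (t, φ t x))
      (fderiv ℝ I (t, φ t x) (1, u (t, φ t x))) t := fun x t =>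
    (hI _).hasFDerivAt.comp_hasDerivAt t ((hasDerivAt_id t).prodMk (hflow x t))
  have hR : Measurable fun p => ENNReal.ofReal (I p ^ 2 + fderiv ℝ I p (1, u p) ^ 2) := by
    have hDI : Measurable fun p => fderiv ℝ I p (1, u p) :=
      isBoundedBilinearMap_apply.continuous.measurable.comp
        ((measurable_fderiv ℝ I).prodMk (continuous_const.prodMk hu).measurable)
    have := hI.continuous.measurable
    fun_prop
  calc ∫⁻ x in ω, ENNReal.ofReal (I (s, φ s x) ^ 2)
      ≤ ∫⁻ x in ω, 2 * ∫⁻ t in Icc (0 : ℝ) 1,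
          ENNReal.ofReal (I (t, φ t x) ^ 2 + fderiv ℝ I (t, φ t x) (1, u (t, φ t x)) ^ 2) :=
      lintegral_mono fun x => ofReal_sq_le_two_mul_lintegral_of_hasDerivAt (hmaterial x) hs
    _ ≤ 2 * ((L : ℝ≥0∞) ^ Fintype.card ι *
        ∫⁻ p in Icc (0 : ℝ) 1 ×ˢ ω, ENNReal.ofReal (I p ^ 2 + fderiv ℝ I p (1, u p) ^ 2)) := by
      rw [lintegral_const_mul' _ _ (by simp)]
      gcongr
      exact setLIntegral_setLIntegral_comp_le measurableSet_Icc hω hφ hanti hmaps hR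
    _ = _ := (mul_assoc _ _ _).symm

theorem setIntegral_sq_le_of_flow {I : ℝ × (ι → ℝ) → ℝ} (hI : Differentiable ℝ I)
    {u : ℝ × (ι → ℝ) → ι → ℝ} (hu : Continuous u)
    (hflow : ∀ x t, HasDerivAt (φ · x) (u (t, φ t x)) t) (hω : MeasurableSet ω)
    (hφ : ContinuousOn (Function.uncurry φ) (Icc 0 1 ×ˢ univ))
    (hlip : ∀ t ∈ Icc (0 : ℝ) 1, LipschitzWith L (φ t))
    (hanti : ∀ t ∈ Icc (0 : ℝ) 1, AntilipschitzWith L (φ t))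
    (hmaps : ∀ t ∈ Icc (0 : ℝ) 1, MapsTo (φ t) ω ω)
    (hI2 : IntegrableOn (fun p => I p ^ 2) (Icc 0 1 ×ˢ ω))
    (hDI2 : IntegrableOn (fun p => fderiv ℝ I p (1, u p) ^ 2) (Icc 0 1 ×ˢ ω))
    {s : ℝ} (hs : s ∈ Icc (0 : ℝ) 1) (hsurj : SurjOn (φ s) ω ω) :
    ∫ x in ω, I (s, x) ^ 2 ≤ 2 * ((L : ℝ) ^ Fintype.card ι) ^ 2 *
      ((∫ p in Icc (0 : ℝ) 1 ×ˢ ω, I p ^ 2) +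
        ∫ p in Icc (0 : ℝ) 1 ×ˢ ω, fderiv ℝ I p (1, u p) ^ 2) := by
  have hbulk : ∫⁻ p in Icc (0 : ℝ) 1 ×ˢ ω, ENNReal.ofReal (I p ^ 2 + fderiv ℝ I p (1, u p) ^ 2) =
      ENNReal.ofReal ((∫ p in Icc (0 : ℝ) 1 ×ˢ ω, I p ^ 2) +
        ∫ p in Icc (0 : ℝ) 1 ×ˢ ω, fderiv ℝ I p (1, u p) ^ 2) := by
    rw [← integral_add hI2 hDI2]
    exact (ofReal_integral_eq_lintegral_ofReal (hI2.add hDI2)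
      (ae_of_all _ fun _ => add_nonneg (sq_nonneg _) (sq_nonneg _))).symm
  have hslice : Continuous fun x => I (s, x) ^ 2 :=
    (hI.continuous.comp (continuous_const.prodMk continuous_id)).pow 2
  refine integral_le_of_lintegral_ofReal_le (ae_of_all _ fun _ => sq_nonneg _)
    hslice.aestronglyMeasurable (by positivity) ?_
  calc ∫⁻ x in ω, ENNReal.ofReal (I (s, x) ^ 2)
      ≤ (L : ℝ≥0∞) ^ Fintype.card ι * ∫⁻ x in ω, ENNReal.ofReal (I (s, φ s x) ^ 2) :=
        (hlip s hs).setLIntegral_le_comp hsurj hslice.measurable.ennreal_ofReal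
    _ ≤ (L : ℝ≥0∞) ^ Fintype.card ι * (2 * (L : ℝ≥0∞) ^ Fintype.card ι *
        ∫⁻ p in Icc (0 : ℝ) 1 ×ˢ ω, ENNReal.ofReal (I p ^ 2 + fderiv ℝ I p (1, u p) ^ 2)) := by
      gcongr
      exact setLIntegral_sq_comp_flow_le hI hu hflow hω hφ hanti hmaps hs
    _ = _ := by
      rw [hbulk, ENNReal.ofReal_mul (by positivity), ENNReal.ofReal_mul zero_le_two,
        ENNReal.ofReal_pow (by positivity), ENNReal.ofReal_pow (by positivity)]
      simp only [ENNReal.ofReal_ofNat, ENNReal.ofReal_coe_nnreal]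
      ring

end Lagrangian

theorem trace_inequality_graph_space_general
    {d : ℕ} (ω : Set ((Fin d) → ℝ)) (hω : MeasurableSet ω)
    (u : ℝ × ((Fin d) → ℝ) → ((Fin d) → ℝ)) (K : NNReal)
    (hu_lip : ∀ t, LipschitzWith K (fun x => u (t, x)))
    (hu_cont : Continuous u)
    (φ ψ : ℝ → ((Fin d) → ℝ) → ((Fin d) → ℝ))
    (hφ0 : ∀ xh, φ 0 xh = xh)
    (hflow : ∀ xh t, HasDerivAt (fun s => φ s xh) (u (t, φ t xh)) t)
    (hbij : ∀ t ∈ Set.Icc (0:ℝ) 1, Set.BijOn (φ t) ω ω ∧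
              Function.LeftInverse (ψ t) (φ t) ∧ Function.RightInverse (ψ t) (φ t)) :
    ∃ C > 0, ∀ I : ℝ × ((Fin d) → ℝ) → ℝ,
      Differentiable ℝ I →
      IntegrableOn (fun p => (I p) ^ 2) (Set.Icc (0:ℝ) 1 ×ˢ ω) volume →
      IntegrableOn (fun p => (fderiv ℝ I p (1, u p)) ^ 2) (Set.Icc (0:ℝ) 1 ×ˢ ω) volume →
      (∫ x in ω, (I (0, x)) ^ 2 ∂volume) ≤
          C * ((∫ p in Set.Icc (0:ℝ) 1 ×ˢ ω, (I p) ^ 2 ∂volume)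
            + (∫ p in Set.Icc (0:ℝ) 1 ×ˢ ω, (fderiv ℝ I p (1, u p)) ^ 2 ∂volume)) ∧
      (∫ x in ω, (I (1, x)) ^ 2 ∂volume) ≤
          C * ((∫ p in Set.Icc (0:ℝ) 1 ×ˢ ω, (I p) ^ 2 ∂volume)
            + (∫ p in Set.Icc (0:ℝ) 1 ×ˢ ω, (fderiv ℝ I p (1, u p)) ^ 2 ∂volume)) := by
  set L := Real.toNNReal (exp (K * 1))
  refine ⟨2 * ((L : ℝ) ^ d) ^ 2, by positivity, fun I hI hI2 hDI2 => ?_⟩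
  have htrace := fun s (hs : s ∈ Icc (0 : ℝ) 1) => setIntegral_sq_le_of_flow hI hu_cont hflow hω
    (continuousOn_uncurry_flow hu_lip hflow hφ0 1)
    (fun t ht => lipschitzWith_flow hu_lip hflow hφ0 ht)
    (fun t ht => antilipschitzWith_flow hu_lip hflow hφ0 ht) (fun t ht => (hbij t ht).1.mapsTo)
    hI2 hDI2 hs (hbij s hs).1.surjOn
  simp only [Fintype.card_fin] at htrace
  exact ⟨htrace 0 (left_mem_Icc.2 zero_le_one), htrace 1 (right_mem_Icc.2 zero_le_one)⟩

/-- Trace inequality, Theorem 2: under Assumption 1 (a spatially Lipschitz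
velocity field `u` whose flow consists of diffeomorphisms of `ω` with uniformly bounded
inverse Jacobian determinant), there is `C > 0` depending only on `Ω = [0,1] × ω` and `u`
such that every `I` in the graph space of the material derivative `b·∇_t I = ∂_t I + u·∇I`
satisfies `‖I‖²_{L²(Γ_i)} ≤ C (‖I‖²_{L²(Ω)} + ‖b·∇_t I‖²_{L²(Ω)})` for `i = 0,1`. -/
theorem trace_inequality_graph_space
    {d : ℕ} (ω : Set ((Fin d) → ℝ)) (hω : MeasurableSet ω)
    (u : ℝ × ((Fin d) → ℝ) → ((Fin d) → ℝ)) (K : NNReal)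
    (hu_lip : ∀ t, LipschitzWith K (fun x => u (t, x)))
    (hu_cont : Continuous u)
    (φ ψ : ℝ → ((Fin d) → ℝ) → ((Fin d) → ℝ))
    (hφ0 : ∀ xh, φ 0 xh = xh)
    (hflow : ∀ xh t, HasDerivAt (fun s => φ s xh) (u (t, φ t xh)) t)
    (hbij : ∀ t ∈ Set.Icc (0:ℝ) 1, Set.BijOn (φ t) ω ω ∧
              Function.LeftInverse (ψ t) (φ t) ∧ Function.RightInverse (ψ t) (φ t))
    (Cu : ℝ)
    (hCu : ∀ t ∈ Set.Icc (0:ℝ) 1, ∀ x ∈ ω,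
        |LinearMap.det ((fderiv ℝ (ψ t) x :
            ((Fin d) → ℝ) →L[ℝ] ((Fin d) → ℝ)) :
            ((Fin d) → ℝ) →ₗ[ℝ] ((Fin d) → ℝ))| ≤ Cu) :
    ∃ C > 0, ∀ I : ℝ × ((Fin d) → ℝ) → ℝ,
      Differentiable ℝ I →
      IntegrableOn (fun p => (I p) ^ 2) (Set.Icc (0:ℝ) 1 ×ˢ ω) volume →
      IntegrableOn (fun p => (fderiv ℝ I p (1, u p)) ^ 2) (Set.Icc (0:ℝ) 1 ×ˢ ω) volume →
      (∫ x in ω, (I (0, x)) ^ 2 ∂volume) ≤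
          C * ((∫ p in Set.Icc (0:ℝ) 1 ×ˢ ω, (I p) ^ 2 ∂volume)
            + (∫ p in Set.Icc (0:ℝ) 1 ×ˢ ω, (fderiv ℝ I p (1, u p)) ^ 2 ∂volume)) ∧
      (∫ x in ω, (I (1, x)) ^ 2 ∂volume) ≤
          C * ((∫ p in Set.Icc (0:ℝ) 1 ×ˢ ω, (I p) ^ 2 ∂volume)
            + (∫ p in Set.Icc (0:ℝ) 1 ×ˢ ω, (fderiv ℝ I p (1, u p)) ^ 2 ∂volume)) :=
  trace_inequality_graph_space_general ω hω u K hu_lip hu_cont φ ψ hφ0 hflow hbij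
end

section
/- Poincaré-type inequality for the graph space: under Assumption 1 there exists C > 0 depending only on Ω and u such that for every I ∈ G(b;Ω), ‖I‖²_{L²(Ω)} ≤ C ( ‖I‖²_{L²(Γ_0)} + ‖I‖²_{L²(Γ_1)} + ‖b·∇_t I‖²_{L²(Ω)} ). -/
/-!
Along a characteristic `s ↦ (s, φ s x)` the material derivative `b·∇I` is the ordinary derivative
of `s ↦ I (s, φ s x)`, so the fundamental theorem of calculus and Cauchy–Schwarz on `[0, 1]` give
`I (t, φ t x)² ≤ 2 I (0, x)² + 2 ∫₀¹ (b·∇I)² (s, φ s x) ds`. Integrate over `x ∈ ω` and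
substitute `y = φ t x`: by Gronwall, `φ t` and its inverse are `e^K`-Lipschitz for `t ∈ [0, 1]`,
and an `L`-Lipschitz map enlarges Lebesgue measure, which is `d`-dimensional Hausdorff measure, by
at most `L^d`. A final integration in `t` gives the inequality with `C = 2 e^{Kd} + 2 e^{2Kd}`.
-/

open MeasureTheory Set
open scoped NNReal ENNReal

theorem sq_integral_le_integral_sq {Ω : Type*} [MeasurableSpace Ω] {μ : Measure Ω}
    [IsProbabilityMeasure μ] {f : Ω → ℝ} (hf : MemLp f 2 μ) :
    (∫ x, f x ∂μ) ^ 2 ≤ ∫ x, f x ^ 2 ∂μ := by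
  have := ProbabilityTheory.variance_nonneg f μ
  rw [ProbabilityTheory.variance_eq_sub hf] at this
  simpa using this

theorem sq_sub_le_integral_deriv_sq {g g' : ℝ → ℝ}
    (hg : ∀ s ∈ Icc (0 : ℝ) 1, HasDerivAt g (g' s) s)
    (hg' : MemLp g' 2 (volume.restrict (Icc (0 : ℝ) 1))) {a b : ℝ}
    (ha : a ∈ Icc (0 : ℝ) 1) (hb : b ∈ Icc (0 : ℝ) 1) (hab : a ≤ b) :
    (g b - g a) ^ 2 ≤ ∫ s in Icc (0 : ℝ) 1, g' s ^ 2 := by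
  have : IsProbabilityMeasure (volume.restrict (Icc (0 : ℝ) 1)) := ⟨by simp⟩
  have hint : IntegrableOn g' (Icc 0 1) := hg'.integrable one_le_two
  have hab01 : Icc a b ⊆ Icc 0 1 := Icc_subset_Icc ha.1 hb.2
  have hftc : ∫ s in a..b, g' s = g b - g a :=
    intervalIntegral.integral_eq_sub_of_hasDerivAt
      (fun s hs => hg s (hab01 (uIcc_of_le hab ▸ hs)))
      ((intervalIntegrable_iff_integrableOn_Icc_of_le hab).2 (hint.mono_set hab01))
  have habs : |g b - g a| ≤ ∫ s in Icc (0 : ℝ) 1, |g' s| :=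
    calc |g b - g a| = |∫ s in Ioc a b, g' s| := by
          rw [← hftc, intervalIntegral.integral_of_le hab]
      _ ≤ ∫ s in Ioc a b, |g' s| := abs_integral_le_integral_abs
      _ ≤ ∫ s in Icc (0 : ℝ) 1, |g' s| :=
          setIntegral_mono_set hint.abs (ae_of_all _ fun _ => abs_nonneg _)
            (Ioc_subset_Icc_self.trans hab01).eventuallyLE
  calc (g b - g a) ^ 2 = |g b - g a| ^ 2 := (sq_abs _).symm
    _ ≤ (∫ s in Icc (0 : ℝ) 1, |g' s|) ^ 2 := by gcongr
    _ ≤ ∫ s in Icc (0 : ℝ) 1, |g' s| ^ 2 := sq_integral_le_integral_sq hg'.abs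
    _ = ∫ s in Icc (0 : ℝ) 1, g' s ^ 2 := by simp_rw [sq_abs]

theorem ofReal_sq_le_of_hasDerivAt {g g' : ℝ → ℝ}
    (hg : ∀ s ∈ Icc (0 : ℝ) 1, HasDerivAt g (g' s) s)
    (hg' : AEStronglyMeasurable g' (volume.restrict (Icc (0 : ℝ) 1))) {a b : ℝ}
    (ha : a ∈ Icc (0 : ℝ) 1) (hb : b ∈ Icc (0 : ℝ) 1) :
    ENNReal.ofReal (g b ^ 2) ≤
      2 * ENNReal.ofReal (g a ^ 2) + 2 * ∫⁻ s in Icc (0 : ℝ) 1, ENNReal.ofReal (g' s ^ 2) := by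
  by_cases hfin : ∫⁻ s in Icc (0 : ℝ) 1, ENNReal.ofReal (g' s ^ 2) = ∞
  · simp [hfin]
  have hg'2 : MemLp g' 2 (volume.restrict (Icc (0 : ℝ) 1)) :=
    (memLp_two_iff_integrable_sq hg').2 ⟨hg'.pow 2, (hasFiniteIntegral_iff_ofReal
      (ae_of_all _ fun _ => sq_nonneg _)).2 (lt_top_iff_ne_top.2 hfin)⟩
  have hsub : (g b - g a) ^ 2 ≤ ∫ s in Icc (0 : ℝ) 1, g' s ^ 2 := by
    rcases le_total a b with hab | hba
    · exact sq_sub_le_integral_deriv_sq hg hg'2 ha hb hab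
    · rw [← neg_sub, neg_sq]
      exact sq_sub_le_integral_deriv_sq hg hg'2 hb ha hba
  rw [← ofReal_integral_eq_lintegral_ofReal hg'2.integrable_sq
    (ae_of_all _ fun _ => sq_nonneg _)]
  calc ENNReal.ofReal (g b ^ 2)
      ≤ ENNReal.ofReal (2 * g a ^ 2 + 2 * ∫ s in Icc (0 : ℝ) 1, g' s ^ 2) :=
        ENNReal.ofReal_le_ofReal (by nlinarith [sq_nonneg (g b - 2 * g a)])
    _ = _ := by
        rw [ENNReal.ofReal_add (by positivity) (by positivity), ENNReal.ofReal_mul zero_le_two,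
          ENNReal.ofReal_mul zero_le_two, ENNReal.ofReal_ofNat]

theorem setLIntegral_Icc_zero_one_le {f : ℝ → ℝ≥0∞} {a : ℝ≥0∞}
    (h : ∀ t ∈ Icc (0 : ℝ) 1, f t ≤ a) : ∫⁻ t in Icc (0 : ℝ) 1, f t ≤ a :=
  (setLIntegral_mono measurable_const h).trans (by simp)

theorem le_setLIntegral_Icc_zero_one {f : ℝ → ℝ≥0∞} {a : ℝ≥0∞}
    (h : ∀ t ∈ Icc (0 : ℝ) 1, a ≤ f t) : a ≤ ∫⁻ t in Icc (0 : ℝ) 1, f t :=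
  (by simp : a = ∫⁻ _ in Icc (0 : ℝ) 1, a).le.trans (setLIntegral_mono' measurableSet_Icc h)

theorem integral_le_of_lintegral_ofReal_le_s9 {α β : Type*} [MeasurableSpace α] [MeasurableSpace β]
    {μ : Measure α} {ν : Measure β} {f h : α → ℝ} {g : β → ℝ} {a b : ℝ} (ha : 0 ≤ a) (hb : 0 ≤ b)
    (hf : Integrable f μ) (hf0 : 0 ≤ᵐ[μ] f) (hh : Integrable h μ) (hh0 : 0 ≤ᵐ[μ] h)
    (hg : AEStronglyMeasurable g ν) (hg0 : 0 ≤ᵐ[ν] g)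
    (hgfin : ∫⁻ y, ENNReal.ofReal (g y) ∂ν ≠ ∞)
    (hle : ∫⁻ x, ENNReal.ofReal (f x) ∂μ ≤
      ENNReal.ofReal a * ∫⁻ y, ENNReal.ofReal (g y) ∂ν +
        ENNReal.ofReal b * ∫⁻ x, ENNReal.ofReal (h x) ∂μ) :
    ∫ x, f x ∂μ ≤ a * ∫ y, g y ∂ν + b * ∫ x, h x ∂μ := by
  have hgi : Integrable g ν := ⟨hg, (hasFiniteIntegral_iff_ofReal hg0).2 hgfin.lt_top⟩
  rw [← ofReal_integral_eq_lintegral_ofReal hf hf0, ← ofReal_integral_eq_lintegral_ofReal hgi hg0,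
    ← ofReal_integral_eq_lintegral_ofReal hh hh0, ← ENNReal.ofReal_mul ha,
    ← ENNReal.ofReal_mul hb, ← ENNReal.ofReal_add (mul_nonneg ha (integral_nonneg_of_ae hg0))
      (mul_nonneg hb (integral_nonneg_of_ae hh0))] at hle
  exact (ENNReal.ofReal_le_ofReal_iff (by
    have := integral_nonneg_of_ae hg0; have := integral_nonneg_of_ae hh0; positivity)).1 hle

section Characteristics

variable {X : Type*} [MeasurableSpace X] {μ : Measure X} {ω : Set X}
  {Φ : ℝ × X → X} {F G : ℝ × X → ℝ≥0∞} {c : ℝ≥0∞}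

noncomputable def lintegralAlong (Φ : ℝ × X → X) (G : ℝ × X → ℝ≥0∞) (x : X) : ℝ≥0∞ :=
  ∫⁻ s in Icc (0 : ℝ) 1, G (s, Φ (s, x))

theorem measurable_lintegralAlong (hΦ : Measurable Φ) (hG : Measurable G) :
    Measurable (lintegralAlong Φ G) :=
  ((hG.comp (measurable_fst.prodMk hΦ)).comp measurable_swap).lintegral_prod_right'

theorem setLIntegral_lintegralAlong_le [SFinite μ] (hΦ : Measurable Φ) (hG : Measurable G)
    (hfwd : ∀ t ∈ Icc (0 : ℝ) 1, ∀ H : X → ℝ≥0∞, Measurable H →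
      ∫⁻ x in ω, H (Φ (t, x)) ∂μ ≤ c * ∫⁻ y in ω, H y ∂μ) :
    ∫⁻ x in ω, lintegralAlong Φ G x ∂μ ≤ c * ∫⁻ p in Icc (0 : ℝ) 1 ×ˢ ω, G p ∂volume.prod μ := by
  have hm : Measurable fun p : ℝ × X => G (p.1, Φ p) := hG.comp (measurable_fst.prodMk hΦ)
  simp only [lintegralAlong]
  rw [lintegral_lintegral_swap (f := fun x s => G (s, Φ (s, x)))
      (hm.comp measurable_swap).aemeasurable,
    setLIntegral_prod _ hG.aemeasurable, ← lintegral_const_mul _ hG.lintegral_prod_right']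
  exact setLIntegral_mono' measurableSet_Icc fun s hs =>
    hfwd s hs _ (hG.comp measurable_prodMk_left)

theorem setLIntegral_slice_le (hΦ : Measurable Φ) (hF : Measurable F) (hG : Measurable G)
    (hbwd : ∀ t ∈ Icc (0 : ℝ) 1, ∀ H : X → ℝ≥0∞, Measurable H →
      ∫⁻ y in ω, H y ∂μ ≤ c * ∫⁻ x in ω, H (Φ (t, x)) ∂μ)
    (hchar : ∀ x, ∀ a ∈ Icc (0 : ℝ) 1, ∀ b ∈ Icc (0 : ℝ) 1,
      F (b, Φ (b, x)) ≤ 2 * F (a, Φ (a, x)) + 2 * lintegralAlong Φ G x)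
    (hΦ0 : ∀ x, Φ (0, x) = x) {t : ℝ} (ht : t ∈ Icc (0 : ℝ) 1) :
    ∫⁻ y in ω, F (t, y) ∂μ ≤
      c * (2 * ∫⁻ x in ω, F (0, x) ∂μ + 2 * ∫⁻ x in ω, lintegralAlong Φ G x ∂μ) := by
  have h0 : (0 : ℝ) ∈ Icc (0 : ℝ) 1 := left_mem_Icc.2 zero_le_one
  have hF0 : Measurable fun x => F (0, x) := hF.comp measurable_prodMk_left
  calc ∫⁻ y in ω, F (t, y) ∂μ ≤ c * ∫⁻ x in ω, F (t, Φ (t, x)) ∂μ :=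
        hbwd t ht _ (hF.comp measurable_prodMk_left)
    _ ≤ c * ∫⁻ x in ω, (2 * F (0, x) + 2 * lintegralAlong Φ G x) ∂μ := by
        gcongr with x
        simpa only [hΦ0] using hchar x 0 h0 t ht
    _ = _ := by
        rw [lintegral_add_left (hF0.const_mul 2), lintegral_const_mul _ hF0,
          lintegral_const_mul _ (measurable_lintegralAlong hΦ hG)]

theorem setLIntegral_initial_le (hΦ : Measurable Φ) (hF : Measurable F) (hG : Measurable G)
    (hfwd : ∀ t ∈ Icc (0 : ℝ) 1, ∀ H : X → ℝ≥0∞, Measurable H →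
      ∫⁻ x in ω, H (Φ (t, x)) ∂μ ≤ c * ∫⁻ y in ω, H y ∂μ)
    (hchar : ∀ x, ∀ a ∈ Icc (0 : ℝ) 1, ∀ b ∈ Icc (0 : ℝ) 1,
      F (b, Φ (b, x)) ≤ 2 * F (a, Φ (a, x)) + 2 * lintegralAlong Φ G x)
    (hΦ0 : ∀ x, Φ (0, x) = x) {t : ℝ} (ht : t ∈ Icc (0 : ℝ) 1) :
    ∫⁻ x in ω, F (0, x) ∂μ ≤
      2 * (c * ∫⁻ y in ω, F (t, y) ∂μ) + 2 * ∫⁻ x in ω, lintegralAlong Φ G x ∂μ := by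
  have h0 : (0 : ℝ) ∈ Icc (0 : ℝ) 1 := left_mem_Icc.2 zero_le_one
  have hFt : Measurable fun x => F (t, Φ (t, x)) :=
    hF.comp (measurable_const.prodMk (hΦ.comp measurable_prodMk_left))
  calc ∫⁻ x in ω, F (0, x) ∂μ
      ≤ ∫⁻ x in ω, (2 * F (t, Φ (t, x)) + 2 * lintegralAlong Φ G x) ∂μ := by
        gcongr with x
        simpa only [hΦ0] using hchar x t ht 0 h0
    _ = 2 * ∫⁻ x in ω, F (t, Φ (t, x)) ∂μ + 2 * ∫⁻ x in ω, lintegralAlong Φ G x ∂μ := by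
        rw [lintegral_add_left (hFt.const_mul 2), lintegral_const_mul _ hFt,
          lintegral_const_mul _ (measurable_lintegralAlong hΦ hG)]
    _ ≤ _ := by
        gcongr
        exact hfwd t ht _ (hF.comp measurable_prodMk_left)

theorem setLIntegral_prod_le_of_characteristics [SFinite μ] (hΦ : Measurable Φ)
    (hF : Measurable F) (hG : Measurable G)
    (hfwd : ∀ t ∈ Icc (0 : ℝ) 1, ∀ H : X → ℝ≥0∞, Measurable H →
      ∫⁻ x in ω, H (Φ (t, x)) ∂μ ≤ c * ∫⁻ y in ω, H y ∂μ)
    (hbwd : ∀ t ∈ Icc (0 : ℝ) 1, ∀ H : X → ℝ≥0∞, Measurable H →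
      ∫⁻ y in ω, H y ∂μ ≤ c * ∫⁻ x in ω, H (Φ (t, x)) ∂μ)
    (hchar : ∀ x, ∀ a ∈ Icc (0 : ℝ) 1, ∀ b ∈ Icc (0 : ℝ) 1,
      F (b, Φ (b, x)) ≤ 2 * F (a, Φ (a, x)) + 2 * lintegralAlong Φ G x)
    (hΦ0 : ∀ x, Φ (0, x) = x) :
    ∫⁻ p in Icc (0 : ℝ) 1 ×ˢ ω, F p ∂volume.prod μ ≤
      2 * c * ∫⁻ x in ω, F (0, x) ∂μ +
        2 * c ^ 2 * ∫⁻ p in Icc (0 : ℝ) 1 ×ˢ ω, G p ∂volume.prod μ := by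
  rw [setLIntegral_prod _ hF.aemeasurable]
  calc ∫⁻ t in Icc (0 : ℝ) 1, ∫⁻ y in ω, F (t, y) ∂μ
      ≤ c * (2 * ∫⁻ x in ω, F (0, x) ∂μ + 2 * ∫⁻ x in ω, lintegralAlong Φ G x ∂μ) :=
        setLIntegral_Icc_zero_one_le fun t ht => setLIntegral_slice_le hΦ hF hG hbwd hchar hΦ0 ht
    _ ≤ c * (2 * ∫⁻ x in ω, F (0, x) ∂μ +
          2 * (c * ∫⁻ p in Icc (0 : ℝ) 1 ×ˢ ω, G p ∂volume.prod μ)) := by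
        gcongr
        exact setLIntegral_lintegralAlong_le hΦ hG hfwd
    _ = _ := by ring

theorem setLIntegral_initial_le_of_characteristics [SFinite μ] (hΦ : Measurable Φ)
    (hF : Measurable F) (hG : Measurable G)
    (hfwd : ∀ t ∈ Icc (0 : ℝ) 1, ∀ H : X → ℝ≥0∞, Measurable H →
      ∫⁻ x in ω, H (Φ (t, x)) ∂μ ≤ c * ∫⁻ y in ω, H y ∂μ)
    (hchar : ∀ x, ∀ a ∈ Icc (0 : ℝ) 1, ∀ b ∈ Icc (0 : ℝ) 1,
      F (b, Φ (b, x)) ≤ 2 * F (a, Φ (a, x)) + 2 * lintegralAlong Φ G x)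
    (hΦ0 : ∀ x, Φ (0, x) = x) :
    ∫⁻ x in ω, F (0, x) ∂μ ≤
      2 * c * (∫⁻ p in Icc (0 : ℝ) 1 ×ˢ ω, F p ∂volume.prod μ +
        ∫⁻ p in Icc (0 : ℝ) 1 ×ˢ ω, G p ∂volume.prod μ) := by
  have hslice : Measurable fun t => ∫⁻ y in ω, F (t, y) ∂μ := hF.lintegral_prod_right'
  calc ∫⁻ x in ω, F (0, x) ∂μ
      ≤ ∫⁻ t in Icc (0 : ℝ) 1,
          (2 * (c * ∫⁻ y in ω, F (t, y) ∂μ) + 2 * ∫⁻ x in ω, lintegralAlong Φ G x ∂μ) :=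
        le_setLIntegral_Icc_zero_one fun t ht => setLIntegral_initial_le hΦ hF hG hfwd hchar hΦ0 ht
    _ = 2 * (c * ∫⁻ p in Icc (0 : ℝ) 1 ×ˢ ω, F p ∂volume.prod μ) +
          2 * ∫⁻ x in ω, lintegralAlong Φ G x ∂μ := by
        rw [lintegral_add_right _ measurable_const, lintegral_const_mul _ (hslice.const_mul c),
          lintegral_const_mul _ hslice, setLIntegral_prod _ hF.aemeasurable]
        simp
    _ ≤ 2 * (c * ∫⁻ p in Icc (0 : ℝ) 1 ×ˢ ω, F p ∂volume.prod μ) +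
          2 * (c * ∫⁻ p in Icc (0 : ℝ) 1 ×ˢ ω, G p ∂volume.prod μ) := by
        gcongr
        exact setLIntegral_lintegralAlong_le hΦ hG hfwd
    _ = _ := by ring

end Characteristics

theorem setIntegral_sq_le_of_characteristics {X : Type*} [MeasurableSpace X] {μ : Measure X}
    [SFinite μ] {ω : Set X} {Φ : ℝ × X → X} {f g : ℝ × X → ℝ} {c : ℝ} (hc : 0 ≤ c)
    (hΦ : Measurable Φ) (hf : Measurable f) (hg : Measurable g)
    (hfi : IntegrableOn (fun p => f p ^ 2) (Icc (0 : ℝ) 1 ×ˢ ω) (volume.prod μ))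
    (hgi : IntegrableOn (fun p => g p ^ 2) (Icc (0 : ℝ) 1 ×ˢ ω) (volume.prod μ))
    (hfwd : ∀ t ∈ Icc (0 : ℝ) 1, ∀ H : X → ℝ≥0∞, Measurable H →
      ∫⁻ x in ω, H (Φ (t, x)) ∂μ ≤ ENNReal.ofReal c * ∫⁻ y in ω, H y ∂μ)
    (hbwd : ∀ t ∈ Icc (0 : ℝ) 1, ∀ H : X → ℝ≥0∞, Measurable H →
      ∫⁻ y in ω, H y ∂μ ≤ ENNReal.ofReal c * ∫⁻ x in ω, H (Φ (t, x)) ∂μ)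
    (hchar : ∀ x, ∀ a ∈ Icc (0 : ℝ) 1, ∀ b ∈ Icc (0 : ℝ) 1,
      ENNReal.ofReal (f (b, Φ (b, x)) ^ 2) ≤ 2 * ENNReal.ofReal (f (a, Φ (a, x)) ^ 2) +
        2 * lintegralAlong Φ (fun p => ENNReal.ofReal (g p ^ 2)) x)
    (hΦ0 : ∀ x, Φ (0, x) = x) :
    ∫ p in Icc (0 : ℝ) 1 ×ˢ ω, f p ^ 2 ∂volume.prod μ ≤
      2 * c * ∫ x in ω, f (0, x) ^ 2 ∂μ +
        2 * c ^ 2 * ∫ p in Icc (0 : ℝ) 1 ×ˢ ω, g p ^ 2 ∂volume.prod μ := by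
  have hF : Measurable fun p => ENNReal.ofReal (f p ^ 2) := (hf.pow_const 2).ennreal_ofReal
  have hG : Measurable fun p => ENNReal.ofReal (g p ^ 2) := (hg.pow_const 2).ennreal_ofReal
  have hinitial := setLIntegral_initial_le_of_characteristics hΦ hF hG hfwd hchar hΦ0
  -- otherwise the Bochner integral of `f (0, ·) ^ 2` would be the junk value `0`
  have hinitial_fin : ∫⁻ x in ω, ENNReal.ofReal (f (0, x) ^ 2) ∂μ ≠ ∞ :=
    (hinitial.trans_lt (ENNReal.mul_lt_top (by finiteness)
      (ENNReal.add_lt_top.2 ⟨hfi.lintegral_lt_top, hgi.lintegral_lt_top⟩))).ne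
  refine integral_le_of_lintegral_ofReal_le_s9 (g := fun x => f (0, x) ^ 2) (by positivity)
    (by positivity) hfi (ae_of_all _ fun _ => sq_nonneg _) hgi (ae_of_all _ fun _ => sq_nonneg _)
    ((hf.comp measurable_prodMk_left).pow_const 2).aestronglyMeasurable
    (ae_of_all _ fun _ => sq_nonneg _) hinitial_fin ?_
  rw [ENNReal.ofReal_mul zero_le_two, ENNReal.ofReal_mul zero_le_two, ENNReal.ofReal_ofNat,
    ENNReal.ofReal_pow hc]
  exact setLIntegral_prod_le_of_characteristics hΦ hF hG hfwd hbwd hchar hΦ0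

theorem setLIntegral_comp_le_of_lipschitzOnWith_leftInvOn {ι : Type*} [Fintype ι]
    {s t : Set (ι → ℝ)} {L : ℝ≥0} {χ σ : (ι → ℝ) → ι → ℝ} (hχ : Measurable χ)
    (hσ : LipschitzOnWith L σ t) (hσχ : LeftInvOn σ χ s) (hχst : MapsTo χ s t)
    {H : (ι → ℝ) → ℝ≥0∞} (hH : Measurable H) :
    ∫⁻ x in s, H (χ x) ≤ (L : ℝ≥0∞) ^ Fintype.card ι * ∫⁻ y in t, H y := by
  have hmap : (volume.restrict s).map χ ≤ ((L : ℝ≥0∞) ^ Fintype.card ι) • volume.restrict t := by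
    refine Measure.le_iff.2 fun A hA => ?_
    rw [Measure.map_apply hχ hA, Measure.restrict_apply (hχ hA), Measure.smul_apply,
      Measure.restrict_apply hA, smul_eq_mul, ← hausdorffMeasure_pi_real, ← ENNReal.rpow_natCast]
    calc μH[(Fintype.card ι : ℝ)] (χ ⁻¹' A ∩ s)
        ≤ μH[(Fintype.card ι : ℝ)] (σ '' (A ∩ t)) :=
          measure_mono fun x ⟨hxA, hxs⟩ => ⟨χ x, ⟨hxA, hχst hxs⟩, hσχ hxs⟩
      _ ≤ _ := (hσ.mono inter_subset_right).hausdorffMeasure_image_le (Nat.cast_nonneg _)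
  calc ∫⁻ x in s, H (χ x) = ∫⁻ y, H y ∂(volume.restrict s).map χ := (lintegral_map hH hχ).symm
    _ ≤ ∫⁻ y, H y ∂(((L : ℝ≥0∞) ^ Fintype.card ι) • volume.restrict t) :=
        lintegral_mono' hmap le_rfl
    _ = _ := lintegral_smul_measure _ _

section Flow

variable {E : Type*} [NormedAddCommGroup E] [NormedSpace ℝ E] {u : ℝ × E → E} {K : ℝ≥0}
  {φ : ℝ → E → E}

theorem continuous_flow (hflow : ∀ x t, HasDerivAt (fun s => φ s x) (u (t, φ t x)) t) (x : E) :
    Continuous fun t => φ t x :=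
  continuous_iff_continuousAt.2 fun t => (hflow x t).continuousAt

theorem dist_flow_le_of_le (hu : ∀ t, LipschitzWith K fun x => u (t, x))
    (hflow : ∀ x t, HasDerivAt (fun s => φ s x) (u (t, φ t x)) t) {s t : ℝ} (hst : s ≤ t)
    (x y : E) : dist (φ t x) (φ t y) ≤ Real.exp (K * (t - s)) * dist (φ s x) (φ s y) := by
  have h := dist_le_of_trajectories_ODE (v := fun r z => u (r, z)) hu
    (continuous_flow hflow x).continuousOn (fun r _ => (hflow x r).hasDerivWithinAt)
    (continuous_flow hflow y).continuousOn (fun r _ => (hflow y r).hasDerivWithinAt)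
    le_rfl t ⟨hst, le_rfl⟩
  rwa [mul_comm] at h

theorem dist_flow_le_of_ge (hu : ∀ t, LipschitzWith K fun x => u (t, x))
    (hflow : ∀ x t, HasDerivAt (fun s => φ s x) (u (t, φ t x)) t) {s t : ℝ} (hts : t ≤ s)
    (x y : E) : dist (φ t x) (φ t y) ≤ Real.exp (K * (s - t)) * dist (φ s x) (φ s y) := by
  have hv : ∀ r, LipschitzWith K fun z => -u (s - r, z) := fun r =>
    LipschitzWith.of_dist_le_mul fun a b => by
      rw [dist_neg_neg]; exact (hu (s - r)).dist_le_mul a b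
  have hback : ∀ z r, HasDerivAt (fun r => φ (s - r) z) (-u (s - r, φ (s - r) z)) r := fun z r => by
    simpa [Function.comp_def] using (hflow z (s - r)).scomp r ((hasDerivAt_id r).const_sub s)
  have h := dist_le_of_trajectories_ODE (v := fun r z => -u (s - r, z)) hv
    ((continuous_flow hflow x).comp (continuous_sub_left s)).continuousOn
    (fun r _ => (hback x r).hasDerivWithinAt)
    ((continuous_flow hflow y).comp (continuous_sub_left s)).continuousOn
    (fun r _ => (hback y r).hasDerivWithinAt)
    le_rfl (s - t) ⟨sub_nonneg.2 hts, le_rfl⟩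
  simpa only [Function.comp_apply, sub_zero, sub_sub_cancel, mul_comm (dist (φ s x) (φ s y))]
    using h

theorem dist_flow_le (hu : ∀ t, LipschitzWith K fun x => u (t, x))
    (hflow : ∀ x t, HasDerivAt (fun s => φ s x) (u (t, φ t x)) t) (s t : ℝ) (x y : E) :
    dist (φ t x) (φ t y) ≤ Real.exp (K * |t - s|) * dist (φ s x) (φ s y) := by
  rcases le_total s t with hst | hts
  · rw [abs_of_nonneg (sub_nonneg.2 hst)]
    exact dist_flow_le_of_le hu hflow hst x y
  · rw [abs_of_nonpos (sub_nonpos.2 hts), neg_sub]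
    exact dist_flow_le_of_ge hu hflow hts x y

theorem lipschitzWith_flow_s9 (hu : ∀ t, LipschitzWith K fun x => u (t, x))
    (hflow : ∀ x t, HasDerivAt (fun s => φ s x) (u (t, φ t x)) t) (hφ0 : ∀ x, φ 0 x = x)
    {T t : ℝ} (ht : |t| ≤ T) : LipschitzWith (Real.exp (K * T)).toNNReal (φ t) :=
  LipschitzWith.of_dist_le_mul fun x y => by
    rw [Real.coe_toNNReal _ (Real.exp_pos _).le]
    calc dist (φ t x) (φ t y) ≤ Real.exp (K * |t - 0|) * dist (φ 0 x) (φ 0 y) :=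
          dist_flow_le hu hflow 0 t x y
      _ ≤ Real.exp (K * T) * dist x y := by
          rw [hφ0, hφ0, sub_zero]
          gcongr

theorem lipschitzWith_flow_inverse (hu : ∀ t, LipschitzWith K fun x => u (t, x))
    (hflow : ∀ x t, HasDerivAt (fun s => φ s x) (u (t, φ t x)) t) (hφ0 : ∀ x, φ 0 x = x)
    {T t : ℝ} (ht : |t| ≤ T) {ψ : E → E} (hψ : Function.RightInverse ψ (φ t)) :
    LipschitzWith (Real.exp (K * T)).toNNReal ψ :=
  LipschitzWith.of_dist_le_mul fun x y => by
    rw [Real.coe_toNNReal _ (Real.exp_pos _).le]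
    calc dist (ψ x) (ψ y) = dist (φ 0 (ψ x)) (φ 0 (ψ y)) := by rw [hφ0, hφ0]
      _ ≤ Real.exp (K * |0 - t|) * dist (φ t (ψ x)) (φ t (ψ y)) := dist_flow_le hu hflow t 0 _ _
      _ ≤ Real.exp (K * T) * dist x y := by
          rw [hψ x, hψ y, zero_sub, abs_neg]
          gcongr

theorem measurable_uncurry_flow [MeasurableSpace E] [BorelSpace E] [SecondCountableTopology E]
    (hu : ∀ t, LipschitzWith K fun x => u (t, x))
    (hflow : ∀ x t, HasDerivAt (fun s => φ s x) (u (t, φ t x)) t) (hφ0 : ∀ x, φ 0 x = x) :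
    Measurable (Function.uncurry φ) :=
  measurable_uncurry_of_continuous_of_measurable (continuous_flow hflow) fun t =>
    (lipschitzWith_flow_s9 hu hflow hφ0 (le_refl |t|)).continuous.measurable

end Flow

section FlowVolume

variable {ι : Type*} [Fintype ι] {u : ℝ × (ι → ℝ) → ι → ℝ} {K : ℝ≥0} {φ : ℝ → (ι → ℝ) → ι → ℝ}
  {ψ : (ι → ℝ) → ι → ℝ} {ω : Set (ι → ℝ)} {T t : ℝ} {H : (ι → ℝ) → ℝ≥0∞}

theorem setLIntegral_comp_flow_le (hu : ∀ t, LipschitzWith K fun x => u (t, x))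
    (hflow : ∀ x t, HasDerivAt (fun s => φ s x) (u (t, φ t x)) t) (hφ0 : ∀ x, φ 0 x = x)
    (ht : |t| ≤ T) (hφω : MapsTo (φ t) ω ω) (hψφ : Function.LeftInverse ψ (φ t))
    (hφψ : Function.RightInverse ψ (φ t)) (hH : Measurable H) :
    ∫⁻ x in ω, H (φ t x) ≤
      ENNReal.ofReal (Real.exp (K * T) ^ Fintype.card ι) * ∫⁻ y in ω, H y := by
  rw [ENNReal.ofReal_pow (Real.exp_pos _).le]
  exact setLIntegral_comp_le_of_lipschitzOnWith_leftInvOn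
    (lipschitzWith_flow_s9 hu hflow hφ0 ht).continuous.measurable
    (lipschitzWith_flow_inverse hu hflow hφ0 ht hφψ).lipschitzOnWith (hψφ.leftInvOn ω) hφω hH

theorem setLIntegral_le_comp_flow (hu : ∀ t, LipschitzWith K fun x => u (t, x))
    (hflow : ∀ x t, HasDerivAt (fun s => φ s x) (u (t, φ t x)) t) (hφ0 : ∀ x, φ 0 x = x)
    (ht : |t| ≤ T) (hφω : BijOn (φ t) ω ω) (hψφ : Function.LeftInverse ψ (φ t))
    (hφψ : Function.RightInverse ψ (φ t)) (hH : Measurable H) :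
    ∫⁻ y in ω, H y ≤
      ENNReal.ofReal (Real.exp (K * T) ^ Fintype.card ι) * ∫⁻ x in ω, H (φ t x) := by
  have hψω : MapsTo ψ ω ω := (hφω.symm ⟨hφψ.leftInvOn ω, hψφ.leftInvOn ω⟩).mapsTo
  rw [ENNReal.ofReal_pow (Real.exp_pos _).le]
  calc ∫⁻ y in ω, H y = ∫⁻ y in ω, H (φ t (ψ y)) := by simp only [hφψ _]
    _ ≤ _ := setLIntegral_comp_le_of_lipschitzOnWith_leftInvOn
      (lipschitzWith_flow_inverse hu hflow hφ0 ht hφψ).continuous.measurable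
      (lipschitzWith_flow_s9 hu hflow hφ0 ht).lipschitzOnWith (hφψ.leftInvOn ω) hψω
      (hH.comp (lipschitzWith_flow_s9 hu hflow hφ0 ht).continuous.measurable)

end FlowVolume

theorem poincare_inequality_graph_space_general
    {d : ℕ} (ω : Set ((Fin d) → ℝ))
    (u : ℝ × ((Fin d) → ℝ) → ((Fin d) → ℝ)) (K : NNReal)
    (hu_lip : ∀ t, LipschitzWith K (fun x => u (t, x)))
    (hu_cont : Continuous u)
    (φ ψ : ℝ → ((Fin d) → ℝ) → ((Fin d) → ℝ))
    (hφ0 : ∀ xh, φ 0 xh = xh)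
    (hflow : ∀ xh t, HasDerivAt (fun s => φ s xh) (u (t, φ t xh)) t)
    (hbij : ∀ t ∈ Set.Icc (0:ℝ) 1, Set.BijOn (φ t) ω ω ∧
              Function.LeftInverse (ψ t) (φ t) ∧ Function.RightInverse (ψ t) (φ t)) :
    ∃ C > 0, ∀ I : ℝ × ((Fin d) → ℝ) → ℝ,
      Differentiable ℝ I →
      IntegrableOn (fun p => (I p) ^ 2) (Set.Icc (0:ℝ) 1 ×ˢ ω) volume →
      IntegrableOn (fun p => (fderiv ℝ I p (1, u p)) ^ 2) (Set.Icc (0:ℝ) 1 ×ˢ ω) volume →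
      (∫ p in Set.Icc (0:ℝ) 1 ×ˢ ω, (I p) ^ 2 ∂volume) ≤
        C * ((∫ x in ω, (I (0, x)) ^ 2 ∂volume)
          + (∫ x in ω, (I (1, x)) ^ 2 ∂volume)
          + (∫ p in Set.Icc (0:ℝ) 1 ×ˢ ω, (fderiv ℝ I p (1, u p)) ^ 2 ∂volume)) := by
  set c := Real.exp (K * 1) ^ Fintype.card (Fin d)
  refine ⟨2 * c + 2 * c ^ 2, by positivity, fun I hI hIsq hDsq => ?_⟩
  have hD : Measurable fun p => fderiv ℝ I p (1, u p) :=
    isBoundedBilinearMap_apply.continuous.measurable.comp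
      ((measurable_fderiv ℝ I).prodMk (continuous_const.prodMk hu_cont).measurable)
  have habs : ∀ t ∈ Icc (0 : ℝ) 1, |t| ≤ 1 := fun t ht => abs_le.2 ⟨by linarith [ht.1], ht.2⟩
  have hchar : ∀ x, ∀ a ∈ Icc (0 : ℝ) 1, ∀ b ∈ Icc (0 : ℝ) 1,
      ENNReal.ofReal (I (b, φ b x) ^ 2) ≤ 2 * ENNReal.ofReal (I (a, φ a x) ^ 2) +
        2 * lintegralAlong (Function.uncurry φ)
          (fun p => ENNReal.ofReal (fderiv ℝ I p (1, u p) ^ 2)) x :=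
    fun x a ha b hb => ofReal_sq_le_of_hasDerivAt
      (fun s _ => (hI _).hasFDerivAt.comp_hasDerivAt s ((hasDerivAt_id s).prodMk (hflow x s)))
      (hD.comp (measurable_id.prodMk (continuous_flow hflow x).measurable)).aestronglyMeasurable
      ha hb
  have hmain := setIntegral_sq_le_of_characteristics (μ := volume) (c := c) (by positivity)
    (measurable_uncurry_flow hu_lip hflow hφ0) hI.continuous.measurable hD hIsq hDsq
    (fun t ht _ hH => setLIntegral_comp_flow_le hu_lip hflow hφ0 (habs t ht)
      (hbij t ht).1.mapsTo (hbij t ht).2.1 (hbij t ht).2.2 hH)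
    (fun t ht _ hH => setLIntegral_le_comp_flow hu_lip hflow hφ0 (habs t ht)
      (hbij t ht).1 (hbij t ht).2.1 (hbij t ht).2.2 hH)
    hchar hφ0
  rw [← Measure.volume_eq_prod] at hmain
  have hc : 0 ≤ c := by positivity
  have hI0 : 0 ≤ ∫ x in ω, I (0, x) ^ 2 := integral_nonneg fun _ => sq_nonneg _
  have hI1 : 0 ≤ ∫ x in ω, I (1, x) ^ 2 := integral_nonneg fun _ => sq_nonneg _
  have hD2 : 0 ≤ ∫ p in Icc (0 : ℝ) 1 ×ˢ ω, fderiv ℝ I p (1, u p) ^ 2 :=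
    integral_nonneg fun _ => sq_nonneg _
  nlinarith [mul_nonneg hc hI1, mul_nonneg (sq_nonneg c) hI1, mul_nonneg hc hD2,
    mul_nonneg (sq_nonneg c) hI0]

/-- Poincaré-type inequality, Theorem 3: under Assumption 1 there exists
`C > 0` depending only on `Ω = [0,1] × ω` and `u` such that every `I` in the graph space
of the material derivative `b·∇_t I = ∂_t I + u·∇I` satisfies
`‖I‖²_{L²(Ω)} ≤ C (‖I‖²_{L²(Γ_0)} + ‖I‖²_{L²(Γ_1)} + ‖b·∇_t I‖²_{L²(Ω)})`. -/
theorem poincare_inequality_graph_space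
    {d : ℕ} (ω : Set ((Fin d) → ℝ)) (hω : MeasurableSet ω)
    (u : ℝ × ((Fin d) → ℝ) → ((Fin d) → ℝ)) (K : NNReal)
    (hu_lip : ∀ t, LipschitzWith K (fun x => u (t, x)))
    (hu_cont : Continuous u)
    (φ ψ : ℝ → ((Fin d) → ℝ) → ((Fin d) → ℝ))
    (hφ0 : ∀ xh, φ 0 xh = xh)
    (hflow : ∀ xh t, HasDerivAt (fun s => φ s xh) (u (t, φ t xh)) t)
    (hbij : ∀ t ∈ Set.Icc (0:ℝ) 1, Set.BijOn (φ t) ω ω ∧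
              Function.LeftInverse (ψ t) (φ t) ∧ Function.RightInverse (ψ t) (φ t))
    (Cu : ℝ)
    (hCu : ∀ t ∈ Set.Icc (0:ℝ) 1, ∀ x ∈ ω,
        |LinearMap.det ((fderiv ℝ (ψ t) x :
            ((Fin d) → ℝ) →L[ℝ] ((Fin d) → ℝ)) :
            ((Fin d) → ℝ) →ₗ[ℝ] ((Fin d) → ℝ))| ≤ Cu) :
    ∃ C > 0, ∀ I : ℝ × ((Fin d) → ℝ) → ℝ,
      Differentiable ℝ I →
      IntegrableOn (fun p => (I p) ^ 2) (Set.Icc (0:ℝ) 1 ×ˢ ω) volume →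
      IntegrableOn (fun p => (fderiv ℝ I p (1, u p)) ^ 2) (Set.Icc (0:ℝ) 1 ×ˢ ω) volume →
      (∫ p in Set.Icc (0:ℝ) 1 ×ˢ ω, (I p) ^ 2 ∂volume) ≤
        C * ((∫ x in ω, (I (0, x)) ^ 2 ∂volume)
          + (∫ x in ω, (I (1, x)) ^ 2 ∂volume)
          + (∫ p in Set.Icc (0:ℝ) 1 ×ˢ ω, (fderiv ℝ I p (1, u p)) ^ 2 ∂volume)) :=
  poincare_inequality_graph_space_general ω u K hu_lip hu_cont φ ψ hφ0 hflow hbij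
end
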